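/- arXiv:1808.02842 — 14 statements merged into one kernel-verified Lean document; each statement's English description precedes it below -/
import Mathlib

section
/- For all Ste > 0 and Bi > 0, define ξ_min = (√(4·Ste² + 8·Ste + 1/Bi²) − 1/Bi) / (2(2+Ste)) and ξ_max = (√(12·Ste² + 36·Ste + 9/Bi²) − 3/Bi) / (2(3+Ste)). Then 0 < ξ_min < ξ_max. -/
/-!
Both `ξ_min` and `ξ_max` are positive roots of quadratics: with `b = 1/Bi`,
`(2 + Ste) ξ² + b ξ = Ste` and `(3 + Ste) ξ² + 3b ξ = 3 Ste` respectively. Since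
`ξ ↦ (3 + Ste) ξ² + 3b ξ` is increasing on `ξ ≥ 0`, it suffices to see that it is below `3 Ste`
at `ξ_min`; there it equals `3 Ste - (3 + 2 Ste) ξ_min²` by the first equation.
-/

noncomputable def posRoot (a b c : ℝ) : ℝ :=
  (Real.sqrt (b ^ 2 + 4 * a * c) - b) / (2 * a)

lemma posRoot_eq {a b c : ℝ} (ha : a ≠ 0) (hd : 0 ≤ b ^ 2 + 4 * a * c) :
    a * posRoot a b c ^ 2 + b * posRoot a b c = c := by
  have hsq := Real.sq_sqrt hd
  unfold posRoot
  generalize Real.sqrt (b ^ 2 + 4 * a * c) = s at hsq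
  field_simp
  linear_combination hsq

lemma posRoot_pos {a b c : ℝ} (ha : 0 < a) (hc : 0 < c) : 0 < posRoot a b c := by
  have hb : b < Real.sqrt (b ^ 2 + 4 * a * c) :=
    (le_abs_self b).trans_lt <| Real.sqrt_sq_eq_abs b ▸ Real.sqrt_lt_sqrt (sq_nonneg b) (by
      nlinarith [mul_pos ha hc])
  exact div_pos (sub_pos.mpr hb) (by positivity)

lemma lt_posRoot {a b c x : ℝ} (ha : 0 < a) (hb : 0 ≤ b) (hx : 0 ≤ x)
    (h : a * x ^ 2 + b * x < c) : x < posRoot a b c := by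
  have hc : 0 < c := by nlinarith
  have hroot := posRoot_eq (b := b) (c := c) ha.ne' (by nlinarith)
  by_contra! hle
  have hr := (posRoot_pos (b := b) ha hc).le
  nlinarith [mul_le_mul hle hle hr hx]

theorem stmt_0 (Ste Bi : ℝ) (hSte : 0 < Ste) (hBi : 0 < Bi) :
    0 < (Real.sqrt (4*Ste^2 + 8*Ste + 1/Bi^2) - 1/Bi) / (2*(2+Ste)) ∧
    (Real.sqrt (4*Ste^2 + 8*Ste + 1/Bi^2) - 1/Bi) / (2*(2+Ste)) <
      (Real.sqrt (12*Ste^2 + 36*Ste + 9/Bi^2) - 3/Bi) / (2*(3+Ste)) := by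
  rw [show 4*Ste^2 + 8*Ste + 1/Bi^2 = (1/Bi)^2 + 4*(2+Ste)*Ste by ring,
    show 12*Ste^2 + 36*Ste + 9/Bi^2 = (3/Bi)^2 + 4*(3+Ste)*(3*Ste) by ring]
  change 0 < posRoot (2+Ste) (1/Bi) Ste ∧
    posRoot (2+Ste) (1/Bi) Ste < posRoot (3+Ste) (3/Bi) (3*Ste)
  set ξ := posRoot (2+Ste) (1/Bi) Ste
  have hξ : 0 < ξ := posRoot_pos (by linarith) hSte
  have hroot : (2+Ste) * ξ^2 + 1/Bi * ξ = Ste := posRoot_eq (by linarith) (by positivity)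
  refine ⟨hξ, lt_posRoot (by linarith) (by positivity) hξ.le ?_⟩
  calc (3+Ste) * ξ^2 + 3/Bi * ξ = 3*Ste - (3 + 2*Ste) * ξ^2 := by linear_combination 3 * hroot
    _ < 3*Ste := sub_lt_self _ (by positivity)
end

section
/- For all Ste > 0 and Bi > 0, the polynomial p₁(z) = (12 + 9·Ste + 2·Ste²)z⁴ + ((21 + 6·Ste)/Bi)z³ + (12/Bi² − 42·Ste − 12·Ste² − 18)z² − ((30·Ste + 9)/Bi)z + 9·Ste(1 + 2·Ste) satisfies p₁(ξ_min) > 0, where ξ_min = (√(4·Ste² + 8·Ste + 1/Bi²) − 1/Bi)/(2(2+Ste)). -/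
/-!
With `a = 2 + Ste` and `b = 1/Bi`, `ξ_min` is the positive root of `q(z) = a z² + b z - Ste`, and
`p₁ = 2 (3 + 2 Ste)² z⁴ - (3 (1 + 2 Ste) z² - 12 b z + 9 (1 + 2 Ste)) q`. Hence
`p₁(ξ_min) = 2 (3 + 2 Ste)² ξ_min⁴ > 0`.
-/

open Real

section QuadraticRoot

variable {a b c x : ℝ}

theorem quadratic_eq_zero_of_eq_sqrt_discrim (ha : a ≠ 0) (hd : 0 ≤ b ^ 2 + 4 * a * c)
    (hx : x = (√(b ^ 2 + 4 * a * c) - b) / (2 * a)) : a * x ^ 2 + b * x - c = 0 := by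
  have hsq := sq_sqrt hd
  have hlin : 2 * a * x = √(b ^ 2 + 4 * a * c) - b := by
    rw [hx]; field_simp
  have h4a : 4 * a * (a * x ^ 2 + b * x - c) = 0 := by
    linear_combination (2 * a * x + √(b ^ 2 + 4 * a * c) + b) * hlin + hsq
  simpa [ha] using h4a

theorem pos_of_eq_sqrt_discrim (ha : 0 < a) (hc : 0 < c)
    (hx : x = (√(b ^ 2 + 4 * a * c) - b) / (2 * a)) : 0 < x := by
  have hb : b < √(b ^ 2 + 4 * a * c) :=
    calc b ≤ |b| := le_abs_self b
      _ = √(b ^ 2) := (sqrt_sq_eq_abs b).symm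
      _ < √(b ^ 2 + 4 * a * c) := sqrt_lt_sqrt (sq_nonneg b) (by nlinarith)
  rw [hx]
  exact div_pos (sub_pos.mpr hb) (by positivity)

end QuadraticRoot

theorem hbim_poly_eq_sub_mul (Ste Bi z : ℝ) :
    (12 + 9*Ste + 2*Ste^2)*z^4 + ((21 + 6*Ste)/Bi)*z^3 +
      (12/Bi^2 - 42*Ste - 12*Ste^2 - 18)*z^2 - ((30*Ste + 9)/Bi)*z + 9*Ste*(1 + 2*Ste) =
    2 * (3 + 2 * Ste) ^ 2 * z ^ 4 -
      (3 * (1 + 2 * Ste) * z ^ 2 - 12 / Bi * z + 9 * (1 + 2 * Ste)) *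
        ((2 + Ste) * z ^ 2 + 1 / Bi * z - Ste) := by
  ring

theorem stmt_1_general (Ste Bi : ℝ) (hSte : 0 < Ste)
    (p₁ : ℝ → ℝ)
    (hp : ∀ z, p₁ z = (12 + 9*Ste + 2*Ste^2)*z^4 + ((21 + 6*Ste)/Bi)*z^3 +
      (12/Bi^2 - 42*Ste - 12*Ste^2 - 18)*z^2 - ((30*Ste + 9)/Bi)*z + 9*Ste*(1 + 2*Ste))
    (ξmin : ℝ)
    (hξ : ξmin = (Real.sqrt (4*Ste^2 + 8*Ste + 1/Bi^2) - 1/Bi) / (2*(2+Ste))) :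
    0 < p₁ ξmin := by
  have ha : 0 < 2 + Ste := by linarith
  rw [show 4*Ste^2 + 8*Ste + 1/Bi^2 = (1/Bi)^2 + 4*(2+Ste)*Ste by ring] at hξ
  have hpos : 0 < ξmin := pos_of_eq_sqrt_discrim ha hSte hξ
  have hroot := quadratic_eq_zero_of_eq_sqrt_discrim ha.ne' (by positivity) hξ
  rw [hp, hbim_poly_eq_sub_mul, hroot, mul_zero, sub_zero]
  positivity

theorem stmt_1 (Ste Bi : ℝ) (hSte : 0 < Ste) (hBi : 0 < Bi)
    (p₁ : ℝ → ℝ)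
    (hp : ∀ z, p₁ z = (12 + 9*Ste + 2*Ste^2)*z^4 + ((21 + 6*Ste)/Bi)*z^3 +
      (12/Bi^2 - 42*Ste - 12*Ste^2 - 18)*z^2 - ((30*Ste + 9)/Bi)*z + 9*Ste*(1 + 2*Ste))
    (ξmin : ℝ)
    (hξ : ξmin = (Real.sqrt (4*Ste^2 + 8*Ste + 1/Bi^2) - 1/Bi) / (2*(2+Ste))) :
    0 < p₁ ξmin :=
  stmt_1_general Ste Bi hSte p₁ hp ξmin hξ
end

section
/- For all Ste > 0 and Bi > 0, the polynomial p₁(z) = (12 + 9·Ste + 2·Ste²)z⁴ + ((21 + 6·Ste)/Bi)z³ + (12/Bi² − 42·Ste − 12·Ste² − 18)z² − ((30·Ste + 9)/Bi)z + 9·Ste(1 + 2·Ste) satisfies p₁(ξ_max) < 0, where ξ_max = (√(12·Ste² + 36·Ste + 9/Bi²) − 3/Bi)/(2(3+Ste)). -/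
/-!
`ξ_max` is the positive root of `(3 + Ste) ξ² + (3 / Bi) ξ = 3 Ste`. Writing `w = ξ / Bi`, this
relation reads `(3 + Ste) ξ² = 3 (Ste - w)`, and eliminating `ξ²` from `p₁(ξ)` leaves
`(3 + Ste)² p₁(ξ) = -3 (2 Ste + 3)² (Ste - w) (w + 3)`. Both factors `Ste - w` and `w + 3` are
positive at the positive root, so `p₁(ξ_max) < 0`.
-/

lemma mul_sq_add_mul_eq_of_eq_sqrt_discrim {a b c ξ : ℝ} (ha : a ≠ 0)
    (hd : 0 ≤ b ^ 2 + 4 * a * c) (hξ : ξ = (√(b ^ 2 + 4 * a * c) - b) / (2 * a)) :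
    a * ξ ^ 2 + b * ξ = c := by
  have hdiscrim : discrim a b (-c) = √(b ^ 2 + 4 * a * c) * √(b ^ 2 + 4 * a * c) := by
    rw [Real.mul_self_sqrt hd, discrim]
    ring
  have hroot := (quadratic_eq_zero_iff ha hdiscrim ξ).mpr (Or.inl (by rw [hξ]; ring))
  linear_combination hroot

lemma sqrt_discrim_sub_div_pos {a b c : ℝ} (ha : 0 < a) (hc : 0 < c) :
    0 < (√(b ^ 2 + 4 * a * c) - b) / (2 * a) := by
  have hb : b < √(b ^ 2 + 4 * a * c) := calc
    b ≤ |b| := le_abs_self b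
    _ = √(b ^ 2) := (Real.sqrt_sq_eq_abs b).symm
    _ < √(b ^ 2 + 4 * a * c) :=
      Real.sqrt_lt_sqrt (sq_nonneg b) (by linarith [mul_pos (mul_pos four_pos ha) hc])
  exact div_pos (sub_pos.mpr hb) (by linarith)

lemma sq_mul_p₁_eq_of_quadratic {Ste Bi ξ : ℝ}
    (h : (3 + Ste) * ξ ^ 2 + 3 / Bi * ξ = 3 * Ste) :
    (3 + Ste) ^ 2 * ((12 + 9*Ste + 2*Ste^2)*ξ^4 + ((21 + 6*Ste)/Bi)*ξ^3 +
      (12/Bi^2 - 42*Ste - 12*Ste^2 - 18)*ξ^2 - ((30*Ste + 9)/Bi)*ξ + 9*Ste*(1 + 2*Ste)) =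
      -3 * (2 * Ste + 3) ^ 2 * (Ste - ξ / Bi) * (ξ / Bi + 3) := by
  linear_combination
    ((12 + 9*Ste + 2*Ste^2) * ((3 + Ste) * ξ^2 + 3 * (Ste - ξ / Bi)) +
      (3 + Ste) * ((21 + 6*Ste) * (ξ / Bi) - (42*Ste + 12*Ste^2 + 18))) * h

theorem stmt_2 (Ste Bi : ℝ) (hSte : 0 < Ste) (hBi : 0 < Bi)
    (p₁ : ℝ → ℝ)
    (hp : ∀ z, p₁ z = (12 + 9*Ste + 2*Ste^2)*z^4 + ((21 + 6*Ste)/Bi)*z^3 +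
      (12/Bi^2 - 42*Ste - 12*Ste^2 - 18)*z^2 - ((30*Ste + 9)/Bi)*z + 9*Ste*(1 + 2*Ste))
    (ξmax : ℝ)
    (hξ : ξmax = (Real.sqrt (12*Ste^2 + 36*Ste + 9/Bi^2) - 3/Bi) / (2*(3+Ste))) :
    p₁ ξmax < 0 := by
  have ha : 0 < 3 + Ste := by linarith
  have hc : 0 < 3 * Ste := by positivity
  have hξ' : ξmax = (√((3 / Bi) ^ 2 + 4 * (3 + Ste) * (3 * Ste)) - 3 / Bi) / (2 * (3 + Ste)) := by
    rw [hξ]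
    ring_nf
  have hroot := mul_sq_add_mul_eq_of_eq_sqrt_discrim ha.ne' (by positivity) hξ'
  have hξpos : 0 < ξmax := hξ' ▸ sqrt_discrim_sub_div_pos ha hc
  have hw : 0 < Ste - ξmax / Bi := by
    have : 3 * (Ste - ξmax / Bi) = (3 + Ste) * ξmax ^ 2 := by linear_combination -hroot
    linarith [mul_pos ha (pow_pos hξpos 2)]
  have hw3 : 0 < ξmax / Bi + 3 := by positivity
  refine neg_of_mul_neg_right (a := (3 + Ste) ^ 2) ?_ (sq_nonneg _)
  rw [hp, sq_mul_p₁_eq_of_quadratic hroot]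
  linarith [mul_pos (mul_pos (pow_pos (by linarith : 0 < 2 * Ste + 3) 2) hw) hw3]
end

section
/- For all Ste > 0 and Bi > 0, the polynomial p₁(z) = (12 + 9·Ste + 2·Ste²)z⁴ + ((21 + 6·Ste)/Bi)z³ + (12/Bi² − 42·Ste − 12·Ste² − 18)z² − ((30·Ste + 9)/Bi)z + 9·Ste(1 + 2·Ste) has exactly one root in the open interval (ξ_min, ξ_max), where ξ_min = (√(4·Ste² + 8·Ste + 1/Bi²) − 1/Bi)/(2(2+Ste)) and ξ_max = (√(12·Ste² + 36·Ste + 9/Bi²) − 3/Bi)/(2(3+Ste)). -/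
/-!
With `b = 1 / Bi`, the endpoints `ξ_min` and `ξ_max` are the positive roots of
`(2 + Ste) ξ² + b ξ = Ste` and `(3 + Ste) ξ² + 3 b ξ = 3 Ste`. Reducing `p₁` modulo these
quadratics gives `p₁(ξ_min) = 2 (2 Ste + 3)² ξ_min⁴ > 0` and
`p₁(ξ_max) = (2 Ste + 3)² ξ_max² (ξ_max² - 3) / 3 < 0`, so a root exists by the intermediate
value theorem. It is unique because `p₁` is strictly decreasing on `[ξ_min, ξ_max]`: in the
coordinates `t = z²`, `w = b z`, the quantity `z p₁'(z)` is a convex quadratic in `(t, w)`, and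
`z ∈ (ξ_min, ξ_max)` puts `(t, w)` in a triangle on whose vertices it is negative.
-/

open Set

theorem quadratic_pos_root {a b c D ξ : ℝ} (ha : 0 < a) (hb : 0 ≤ b) (hc : 0 < c)
    (hD : D = b ^ 2 + 4 * a * c) (hξ : ξ = (√D - b) / (2 * a)) :
    0 < ξ ∧ a * ξ ^ 2 + b * ξ = c := by
  have hD_nonneg : 0 ≤ D := by rw [hD]; positivity
  have hsq : √D ^ 2 = D := Real.sq_sqrt hD_nonneg
  have hb_lt : b < √D := (Real.lt_sqrt hb).mpr (by rw [hD]; nlinarith [mul_pos ha hc])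
  subst hξ
  refine ⟨div_pos (by linarith) (by linarith), ?_⟩
  field_simp
  linear_combination hsq + hD

theorem existsUnique_mem_Ioo_eq_zero_of_strictAntiOn {f : ℝ → ℝ} {a b : ℝ} (hab : a ≤ b)
    (hf : ContinuousOn f (Icc a b)) (hanti : StrictAntiOn f (Icc a b))
    (ha : 0 < f a) (hb : f b < 0) :
    ∃! z, z ∈ Ioo a b ∧ f z = 0 := by
  obtain ⟨z, hz, hfz⟩ := intermediate_value_Ioo' hab hf ⟨hb, ha⟩
  refine ⟨z, ⟨hz, hfz⟩, fun y ⟨hy, hfy⟩ => ?_⟩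
  exact hanti.injOn (Ioo_subset_Icc_self hy) (Ioo_subset_Icc_self hz) (hfy.trans hfz.symm)

noncomputable def stefanQuartic (S Bi z : ℝ) : ℝ :=
  (12 + 9*S + 2*S^2)*z^4 + ((21 + 6*S)/Bi)*z^3 +
    (12/Bi^2 - 42*S - 12*S^2 - 18)*z^2 - ((30*S + 9)/Bi)*z + 9*S*(1 + 2*S)

noncomputable def stefanQuarticDeriv (S Bi z : ℝ) : ℝ :=
  4*(12 + 9*S + 2*S^2)*z^3 + 3*((21 + 6*S)/Bi)*z^2 +
    2*(12/Bi^2 - 42*S - 12*S^2 - 18)*z - (30*S + 9)/Bi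

section StefanQuartic

variable {S Bi : ℝ}

theorem hasDerivAt_stefanQuartic (z : ℝ) :
    HasDerivAt (stefanQuartic S Bi) (stefanQuarticDeriv S Bi z) z := by
  have h := (((((hasDerivAt_pow 4 z).const_mul (12 + 9*S + 2*S^2)).add
    ((hasDerivAt_pow 3 z).const_mul ((21 + 6*S)/Bi))).add
    ((hasDerivAt_pow 2 z).const_mul (12/Bi^2 - 42*S - 12*S^2 - 18))).sub
    ((hasDerivAt_id' z).const_mul ((30*S + 9)/Bi))).add_const (9*S*(1 + 2*S))
  refine h.congr_deriv ?_
  simp only [stefanQuarticDeriv]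
  push_cast
  ring

theorem continuous_stefanQuartic : Continuous (stefanQuartic S Bi) :=
  continuous_iff_continuousAt.mpr fun z => (hasDerivAt_stefanQuartic z).continuousAt

theorem stefanQuartic_pos_of_lower_root (hS : 0 < S) {ξ : ℝ} (hξ : 0 < ξ)
    (h : (2 + S) * ξ ^ 2 + 1 / Bi * ξ = S) : 0 < stefanQuartic S Bi ξ := by
  have hval : stefanQuartic S Bi ξ = 2 * (2*S + 3)^2 * ξ^4 := by
    unfold stefanQuartic
    linear_combination ((21 + 6*S)*ξ^2 + 12*(ξ/Bi + S - (2 + S)*ξ^2) - (30*S + 9)) * h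
  rw [hval]
  positivity

theorem stefanQuartic_neg_of_upper_root (hS : 0 < S) (hBi : 0 < Bi) {ξ : ℝ} (hξ : 0 < ξ)
    (h : (3 + S) * ξ ^ 2 + 3 / Bi * ξ = 3 * S) : stefanQuartic S Bi ξ < 0 := by
  have hval : stefanQuartic S Bi ξ = (2*S + 3)^2 * ξ^2 * (ξ^2 - 3) / 3 := by
    unfold stefanQuartic
    linear_combination
      (((21 + 6*S)*ξ^2 + 12*(ξ/Bi + S - (3 + S)*ξ^2/3) - (30*S + 9)) / 3) * h
  have hξ_sq : ξ ^ 2 < 3 := by nlinarith [mul_pos (div_pos three_pos hBi) hξ]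
  rw [hval]
  have : 0 < (2*S + 3)^2 * ξ^2 := by positivity
  nlinarith

/-- The constraints cut out the triangle with vertices `(0, S)`, `(S / (2 + S), 0)` and
`(3 S / (3 + S), 0)`, with barycentric coordinates proportional to `w`, `a₂` and `a₁`. Since the
quadratic is convex and negative at the vertices, expanding it in these coordinates (`hbary`)
writes its negative as a sum of nonnegative terms. -/
theorem quadratic_neg_on_triangle {S t w : ℝ} (hS : 0 < S) (hw : 0 < w)
    (h₁ : S ≤ (2 + S) * t + w) (h₂ : (3 + S) * t + 3 * w ≤ 3 * S) :
    (48 + 36*S + 8*S^2)*t^2 + 3*(21 + 6*S)*t*w + 24*w^2 - (84*S + 24*S^2 + 36)*t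
      - (30*S + 9)*w < 0 := by
  set a₁ := (2 + S) * t + w - S
  set a₂ := 3 * S - (3 + S) * t - 3 * w
  have ha₁ : 0 ≤ a₁ := by linarith
  have ha₂ : 0 ≤ a₂ := by linarith
  have hbary : -((2 + S) * (3 + S)) * ((48 + 36*S + 8*S^2)*t^2 + 3*(21 + 6*S)*t*w + 24*w^2
      - (84*S + 24*S^2 + 36)*t - (30*S + 9)*w) =
      3*(2*S + 3)*(2 + S)*(3 + S)*w + 4*(2*S^2 + 9*S + 6)*(3 + S)*a₂ + 36*(2*S + 3)*(2 + S)*a₁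
        + (7*S + 6)*(3 + S)*w*a₂ + 3*(7*S + 9)*(2 + S)*w*a₁ + (8*S^2 + 36*S + 48)*a₁*a₂ := by
    ring
  have hpos : 0 < -((2 + S) * (3 + S)) * ((48 + 36*S + 8*S^2)*t^2 + 3*(21 + 6*S)*t*w
      + 24*w^2 - (84*S + 24*S^2 + 36)*t - (30*S + 9)*w) := by
    rw [hbary]; positivity
  exact neg_of_mul_pos_right hpos (neg_nonpos.mpr (by positivity))

theorem stefanQuarticDeriv_neg (hS : 0 < S) (hBi : 0 < Bi) {z : ℝ} (hz : 0 < z)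
    (hlower : S ≤ (2 + S) * z ^ 2 + 1 / Bi * z) (hupper : (3 + S) * z ^ 2 + 3 / Bi * z ≤ 3 * S) :
    stefanQuarticDeriv S Bi z < 0 := by
  have hform : z * stefanQuarticDeriv S Bi z =
      (48 + 36*S + 8*S^2)*(z^2)^2 + 3*(21 + 6*S)*z^2*(z/Bi) + 24*(z/Bi)^2
        - (84*S + 24*S^2 + 36)*z^2 - (30*S + 9)*(z/Bi) := by
    unfold stefanQuarticDeriv
    ring
  have hneg := quadratic_neg_on_triangle (t := z ^ 2) hS (div_pos hz hBi)
    (by linarith [one_div_mul_eq_div Bi z]) (by linarith [show 3 / Bi * z = 3 * (z / Bi) by ring])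
  exact neg_of_mul_neg_right (hform ▸ hneg) hz.le

theorem lower_root_lt_upper_root (hS : 0 < S) (hBi : 0 < Bi) {ξ₁ ξ₂ : ℝ}
    (hξ₁ : 0 < ξ₁) (hξ₂ : 0 < ξ₂) (h₁ : (2 + S) * ξ₁ ^ 2 + 1 / Bi * ξ₁ = S)
    (h₂ : (3 + S) * ξ₂ ^ 2 + 3 / Bi * ξ₂ = 3 * S) : ξ₁ < ξ₂ := by
  by_contra! hle
  have hsq : ξ₂ ^ 2 ≤ ξ₁ ^ 2 := pow_le_pow_left₀ hξ₂.le hle 2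
  have hlin : 3 / Bi * ξ₂ ≤ 3 / Bi * ξ₁ := by gcongr
  have h₁' : 3 / Bi * ξ₁ = 3 * (1 / Bi * ξ₁) := by ring
  nlinarith [mul_pos hS (pow_pos hξ₁ 2), mul_le_mul_of_nonneg_left hsq (by linarith : 0 ≤ 3 + S)]

theorem stefanQuartic_strictAntiOn (hS : 0 < S) (hBi : 0 < Bi) {ξ₁ ξ₂ : ℝ} (hξ₁ : 0 < ξ₁)
    (h₁ : (2 + S) * ξ₁ ^ 2 + 1 / Bi * ξ₁ = S) (h₂ : (3 + S) * ξ₂ ^ 2 + 3 / Bi * ξ₂ = 3 * S) :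
    StrictAntiOn (stefanQuartic S Bi) (Icc ξ₁ ξ₂) := by
  refine strictAntiOn_of_hasDerivWithinAt_neg (convex_Icc ξ₁ ξ₂)
    continuous_stefanQuartic.continuousOn
    (fun z _ => (hasDerivAt_stefanQuartic z).hasDerivWithinAt) fun z hz => ?_
  rw [interior_Icc] at hz
  obtain ⟨hz₁, hz₂⟩ := hz
  have hz : 0 < z := hξ₁.trans hz₁
  refine stefanQuarticDeriv_neg hS hBi hz ?_ ?_
  · have : ξ₁ ^ 2 ≤ z ^ 2 := pow_le_pow_left₀ hξ₁.le hz₁.le 2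
    have : 1 / Bi * ξ₁ ≤ 1 / Bi * z := by gcongr
    nlinarith
  · have : z ^ 2 ≤ ξ₂ ^ 2 := pow_le_pow_left₀ hz.le hz₂.le 2
    have : 3 / Bi * z ≤ 3 / Bi * ξ₂ := by gcongr
    nlinarith

end StefanQuartic

theorem stmt_3 (Ste Bi : ℝ) (hSte : 0 < Ste) (hBi : 0 < Bi)
    (p₁ : ℝ → ℝ)
    (hp : ∀ z, p₁ z = (12 + 9*Ste + 2*Ste^2)*z^4 + ((21 + 6*Ste)/Bi)*z^3 +
      (12/Bi^2 - 42*Ste - 12*Ste^2 - 18)*z^2 - ((30*Ste + 9)/Bi)*z + 9*Ste*(1 + 2*Ste))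
    (ξmin ξmax : ℝ)
    (hξmin : ξmin = (Real.sqrt (4*Ste^2 + 8*Ste + 1/Bi^2) - 1/Bi) / (2*(2+Ste)))
    (hξmax : ξmax = (Real.sqrt (12*Ste^2 + 36*Ste + 9/Bi^2) - 3/Bi) / (2*(3+Ste))) :
    ∃! z, z ∈ Set.Ioo ξmin ξmax ∧ p₁ z = 0 := by
  obtain ⟨hmin_pos, hmin⟩ := quadratic_pos_root (by linarith) (by positivity) hSte
    (by ring) hξmin
  obtain ⟨hmax_pos, hmax⟩ := quadratic_pos_root (by linarith) (by positivity)
    (by positivity : 0 < 3 * Ste) (by ring) hξmax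
  obtain rfl : p₁ = stefanQuartic Ste Bi := funext hp
  exact existsUnique_mem_Ioo_eq_zero_of_strictAntiOn
    (lower_root_lt_upper_root hSte hBi hmin_pos hmax_pos hmin hmax).le
    continuous_stefanQuartic.continuousOn
    (stefanQuartic_strictAntiOn hSte hBi hmin_pos hmin hmax)
    (stefanQuartic_pos_of_lower_root hSte hmin_pos hmin)
    (stefanQuartic_neg_of_upper_root hSte hBi hmax_pos hmax)
end

section
/- For all Ste > 0 and Bi > 0, the polynomial p₂(z) = z⁴ + (2/Bi)z³ + (6 + Ste)z² + (3/Bi)z − 3·Ste satisfies p₂(ξ_min) < 0, where ξ_min = (√(4·Ste² + 8·Ste + 1/Bi²) − 1/Bi)/(2(2+Ste)). -/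
/-!
`ξ_min` is the positive root of `q(z) = (2 + Ste) z² + z / Bi - Ste`, and
`p₂(z) = (2z² + 3) q(z) - (3 + 2 Ste) z⁴`, so `p₂(ξ_min) = -(3 + 2 Ste) ξ_min⁴ < 0`.
-/

theorem quadratic_eq_zero_of_eq_root {a b c x : ℝ} (ha : a ≠ 0) (hd : 0 ≤ b ^ 2 + 4 * a * c)
    (hx : x = (-b + √(b ^ 2 + 4 * a * c)) / (2 * a)) :
    a * x ^ 2 + b * x - c = 0 := by
  have hsq : (2 * a * x + b) ^ 2 = b ^ 2 + 4 * a * c := by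
    rw [hx, mul_div_cancel₀ _ (mul_ne_zero two_ne_zero ha), neg_add_cancel_comm]
    exact Real.sq_sqrt hd
  have h4a : 4 * a ≠ 0 := mul_ne_zero four_ne_zero ha
  apply (mul_eq_zero.mp _).resolve_left h4a
  linear_combination hsq

theorem pos_of_eq_root {a b c x : ℝ} (ha : 0 < a) (hc : 0 < c)
    (hx : x = (-b + √(b ^ 2 + 4 * a * c)) / (2 * a)) :
    0 < x := by
  have hb : b < √(b ^ 2 + 4 * a * c) :=
    calc b ≤ |b| := le_abs_self b
      _ = √(b ^ 2) := (Real.sqrt_sq_eq_abs b).symm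
      _ < √(b ^ 2 + 4 * a * c) := Real.sqrt_lt_sqrt (sq_nonneg b) (by nlinarith)
  rw [hx]
  exact div_pos (by linarith) (by linarith)

theorem stmt_5_general (Ste Bi : ℝ) (hSte : 0 < Ste)
    (p₂ : ℝ → ℝ)
    (hp : ∀ z, p₂ z = z^4 + (2/Bi)*z^3 + (6 + Ste)*z^2 + (3/Bi)*z - 3*Ste)
    (ξmin : ℝ)
    (hξ : ξmin = (Real.sqrt (4*Ste^2 + 8*Ste + 1/Bi^2) - 1/Bi) / (2*(2+Ste))) :
    p₂ ξmin < 0 := by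
  have hk : 0 < 2 + Ste := by linarith
  have hξ' : ξmin = (-(1/Bi) + √((1/Bi)^2 + 4*(2+Ste)*Ste)) / (2*(2+Ste)) := by
    rw [hξ, show 4*Ste^2 + 8*Ste + 1/Bi^2 = (1/Bi)^2 + 4*(2+Ste)*Ste by ring]
    ring
  have hroot := quadratic_eq_zero_of_eq_root hk.ne' (by positivity) hξ'
  have hpos := pos_of_eq_root hk hSte hξ'
  calc p₂ ξmin
      = (2*ξmin^2 + 3) * ((2+Ste)*ξmin^2 + 1/Bi*ξmin - Ste) - (3 + 2*Ste)*ξmin^4 := by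
        rw [hp]; ring
    _ = -((3 + 2*Ste)*ξmin^4) := by rw [hroot]; ring
    _ < 0 := neg_neg_of_pos (by positivity)

theorem stmt_5 (Ste Bi : ℝ) (hSte : 0 < Ste) (hBi : 0 < Bi)
    (p₂ : ℝ → ℝ)
    (hp : ∀ z, p₂ z = z^4 + (2/Bi)*z^3 + (6 + Ste)*z^2 + (3/Bi)*z - 3*Ste)
    (ξmin : ℝ)
    (hξ : ξmin = (Real.sqrt (4*Ste^2 + 8*Ste + 1/Bi^2) - 1/Bi) / (2*(2+Ste))) :
    p₂ ξmin < 0 :=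
  stmt_5_general Ste Bi hSte p₂ hp ξmin hξ
end

section
/- For all Ste > 0 and Bi > 0, the polynomial p₂(z) = z⁴ + (2/Bi)z³ + (6 + Ste)z² + (3/Bi)z − 3·Ste satisfies p₂(ξ_max) > 0, where ξ_max = (√(12·Ste² + 36·Ste + 9/Bi²) − 3/Bi)/(2(3+Ste)). -/
/-! ξ_max is the positive root of the quadratic `(3 + Ste) z² + (3/Bi) z − 3 Ste`, and
`p₂ z` exceeds that quadratic by `z⁴ + (2/Bi) z³ + 3 z²`, which is positive for `z > 0`. -/

namespace QuadraticPositiveRoot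

variable {a b c x : ℝ}

theorem mul_sq_add_mul_sub_eq_zero (ha : a ≠ 0) (hd : 0 ≤ b ^ 2 + 4 * a * c)
    (hx : x = (√(b ^ 2 + 4 * a * c) - b) / (2 * a)) : a * x ^ 2 + b * x - c = 0 := by
  have hdiscrim : discrim a b (-c) = √(b ^ 2 + 4 * a * c) * √(b ^ 2 + 4 * a * c) := by
    rw [Real.mul_self_sqrt hd, discrim]
    ring
  have := (quadratic_eq_zero_iff ha hdiscrim x).mpr (Or.inl (by rw [hx]; ring))
  linear_combination this

theorem pos (ha : 0 < a) (hc : 0 < c) (hx : x = (√(b ^ 2 + 4 * a * c) - b) / (2 * a)) :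
    0 < x := by
  have hb : b < √(b ^ 2 + 4 * a * c) :=
    calc b ≤ |b| := le_abs_self b
      _ = √(b ^ 2) := (Real.sqrt_sq_eq_abs b).symm
      _ < √(b ^ 2 + 4 * a * c) := Real.sqrt_lt_sqrt (sq_nonneg b) (by nlinarith)
  rw [hx]
  exact div_pos (sub_pos.mpr hb) (by positivity)

end QuadraticPositiveRoot

theorem stmt_6 (Ste Bi : ℝ) (hSte : 0 < Ste) (hBi : 0 < Bi)
    (p₂ : ℝ → ℝ)
    (hp : ∀ z, p₂ z = z^4 + (2/Bi)*z^3 + (6 + Ste)*z^2 + (3/Bi)*z - 3*Ste)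
    (ξmax : ℝ)
    (hξ : ξmax = (Real.sqrt (12*Ste^2 + 36*Ste + 9/Bi^2) - 3/Bi) / (2*(3+Ste))) :
    0 < p₂ ξmax := by
  have hdisc : 12*Ste^2 + 36*Ste + 9/Bi^2 = (3/Bi)^2 + 4*(3+Ste)*(3*Ste) := by ring
  rw [hdisc] at hξ
  have h3Ste : 0 < 3 + Ste := by linarith
  have hroot : (3+Ste)*ξmax^2 + (3/Bi)*ξmax - 3*Ste = 0 :=
    QuadraticPositiveRoot.mul_sq_add_mul_sub_eq_zero h3Ste.ne' (by positivity) hξ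
  have hpos : 0 < ξmax := QuadraticPositiveRoot.pos h3Ste (by positivity) hξ
  calc 0 < ξmax^4 + (2/Bi)*ξmax^3 + 3*ξmax^2 := by positivity
    _ = ξmax^4 + (2/Bi)*ξmax^3 + 3*ξmax^2 + ((3+Ste)*ξmax^2 + (3/Bi)*ξmax - 3*Ste) := by
      rw [hroot, add_zero]
    _ = p₂ ξmax := by rw [hp]; ring
end

section
/- For all Ste > 0 and Bi > 0, the polynomial p₄(z) = Ste·z⁴ − (1/Bi)z³ − 6(1 + Ste)z² − (3/Bi)z + 9·Ste has exactly one root in the open interval (0, √3). -/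
/-!
On `(0, √3)` the derivative `4 Ste z³ - (3/Bi) z² - 12 (1 + Ste) z - 3/Bi` is negative, since
`z² < 3` makes `4 Ste z³ < 12 Ste z`. So `p₄` is strictly decreasing on `[0, √3]`, and
`p₄ 0 = 9 Ste > 0 > -18 - 6√3/Bi = p₄ √3`; the intermediate value theorem gives a root, and
monotonicity makes it unique.
-/

open Set Real

theorem StrictAntiOn.existsUnique_mem_Ioo_eq {f : ℝ → ℝ} {a b c : ℝ} (hab : a ≤ b)
    (hcont : ContinuousOn f (Icc a b)) (hanti : StrictAntiOn f (Icc a b))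
    (hb : f b < c) (ha : c < f a) : ∃! z, z ∈ Ioo a b ∧ f z = c := by
  obtain ⟨z, hz, hfz⟩ := intermediate_value_Ioo' hab hcont ⟨hb, ha⟩
  refine ⟨z, ⟨hz, hfz⟩, fun y ⟨hy, hfy⟩ => ?_⟩
  exact hanti.injOn (Ioo_subset_Icc_self hy) (Ioo_subset_Icc_self hz) (hfy.trans hfz.symm)

noncomputable def heatBalancePoly (Ste Bi z : ℝ) : ℝ :=
  Ste*z^4 - (1/Bi)*z^3 - 6*(1 + Ste)*z^2 - (3/Bi)*z + 9*Ste

section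
variable (Ste Bi : ℝ)

theorem hasDerivAt_heatBalancePoly (z : ℝ) :
    HasDerivAt (heatBalancePoly Ste Bi)
      (4*Ste*z^3 - (3/Bi)*z^2 - 12*(1 + Ste)*z - 3/Bi) z := by
  have h := (((((hasDerivAt_pow 4 z).const_mul Ste).sub ((hasDerivAt_pow 3 z).const_mul (1/Bi))).sub
    ((hasDerivAt_pow 2 z).const_mul (6*(1 + Ste)))).sub ((hasDerivAt_id z).const_mul (3/Bi))).add_const
    (9*Ste)
  exact h.congr_deriv (by norm_num; ring)

theorem continuous_heatBalancePoly : Continuous (heatBalancePoly Ste Bi) := by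
  unfold heatBalancePoly; fun_prop

theorem heatBalancePoly_zero : heatBalancePoly Ste Bi 0 = 9*Ste := by
  simp [heatBalancePoly]

theorem heatBalancePoly_sqrt_three : heatBalancePoly Ste Bi √3 = -18 - 6*√3/Bi := by
  have h2 : √3^2 = 3 := sq_sqrt (by norm_num)
  have h3 : √3^3 = 3*√3 := by rw [pow_succ, h2]
  have h4 : √3^4 = 9 := by rw [show 4 = 2*2 by rfl, pow_mul, h2]; norm_num
  simp only [heatBalancePoly, h2, h3, h4]
  ring

variable {Ste Bi}

theorem deriv_heatBalancePoly_neg (hSte : 0 < Ste) (hBi : 0 < Bi) {z : ℝ} (hz : z ∈ Ioo 0 √3) :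
    deriv (heatBalancePoly Ste Bi) z < 0 := by
  rw [(hasDerivAt_heatBalancePoly Ste Bi z).deriv]
  obtain ⟨hz0, hz3⟩ := hz
  have hsq : z^2 < 3 := by
    calc z^2 < √3^2 := by gcongr
      _ = 3 := sq_sqrt (by norm_num)
  have hcubic : 4*Ste*z^3 < 12*Ste*z := by
    nlinarith [mul_lt_mul_of_pos_left hsq (mul_pos hSte hz0)]
  have : 0 < 3/Bi := by positivity
  nlinarith [sq_nonneg z]

theorem strictAntiOn_heatBalancePoly (hSte : 0 < Ste) (hBi : 0 < Bi) :
    StrictAntiOn (heatBalancePoly Ste Bi) (Icc 0 √3) := by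
  refine strictAntiOn_of_deriv_neg (convex_Icc 0 √3) (continuous_heatBalancePoly Ste Bi).continuousOn
    fun z hz => ?_
  rw [interior_Icc] at hz
  exact deriv_heatBalancePoly_neg hSte hBi hz

end

theorem stmt_8 (Ste Bi : ℝ) (hSte : 0 < Ste) (hBi : 0 < Bi)
    (p₄ : ℝ → ℝ)
    (hp : ∀ z, p₄ z = Ste*z^4 - (1/Bi)*z^3 - 6*(1 + Ste)*z^2 - (3/Bi)*z + 9*Ste) :
    ∃! z, z ∈ Set.Ioo (0:ℝ) (Real.sqrt 3) ∧ p₄ z = 0 := by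
  obtain rfl : p₄ = heatBalancePoly Ste Bi := funext hp
  refine (strictAntiOn_heatBalancePoly hSte hBi).existsUnique_mem_Ioo_eq (sqrt_nonneg 3)
    (continuous_heatBalancePoly Ste Bi).continuousOn ?_ ?_
  · rw [heatBalancePoly_sqrt_three]
    have : 0 < 6*√3/Bi := by positivity
    linarith
  · rw [heatBalancePoly_zero]; positivity
end

section
/- For every Ste > 0, the number ξ₁∞ = √( (3(2·Ste+1)(Ste+3) − (9 + 6·Ste)√(2·Ste+1)) / (12 + 9·Ste + 2·Ste²) ) is well-defined (the expression under the outer square root is positive), satisfies the equation (12 + 9·Ste + 2·Ste²)z⁴ − (42·Ste + 12·Ste² + 18)z² + 9·Ste(1 + 2·Ste) = 0, and lies in the open interval (√(Ste/(2+Ste)), √(3·Ste/(3+Ste))). -/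
/-! With `s = √(2·Ste + 1) > 1`, i.e. `Ste = (s² - 1)/2`, the denominator factors as
`(s² + s + 4)(s² - s + 4)/2` and the numerator as `3s(s - 1)(s² - s + 4)/2`, so
`ξ₁∞² = 3s(s - 1)/(s² + s + 4)`. In this variable the quartic, read as a quadratic in `ξ²`, has the
roots `3s(s ∓ 1)/(s² ± s + 4)`, and both bounds become polynomial inequalities in `s` that are
evident for `s > 1`. -/

namespace GoodmanHBIM

lemma denom_pos (t : ℝ) : 0 < 12 + 9*t + 2*t^2 := by
  nlinarith [sq_nonneg (t + 9/4)]

lemma sq_free_boundary_coeff_eq {t s : ℝ} (hs : s^2 = 2*t + 1) :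
    (3*(2*t+1)*(t+3) - (9 + 6*t)*s) / (12 + 9*t + 2*t^2) = 3*s*(s-1) / (s^2 + s + 4) := by
  obtain rfl : t = (s^2 - 1)/2 := by linarith
  have hs' : s^2 + s + 4 ≠ 0 := by nlinarith [sq_nonneg (s + 1/2)]
  rw [div_eq_div_iff (denom_pos _).ne' hs']
  ring

lemma quartic_eq_zero {t s : ℝ} (hs : s^2 = 2*t + 1) :
    (12 + 9*t + 2*t^2) * (3*s*(s-1) / (s^2 + s + 4))^2
      - (42*t + 12*t^2 + 18) * (3*s*(s-1) / (s^2 + s + 4)) + 9*t*(1 + 2*t) = 0 := by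
  obtain rfl : t = (s^2 - 1)/2 := by linarith
  have hs' : s^2 + s + 4 ≠ 0 := by nlinarith [sq_nonneg (s + 1/2)]
  generalize hd : s^2 + s + 4 = d at hs' ⊢
  field_simp
  rw [← hd]
  ring

lemma lower_bound_lt {t s : ℝ} (hs1 : 1 < s) (hs : s^2 = 2*t + 1) :
    t / (2 + t) < 3*s*(s-1) / (s^2 + s + 4) := by
  obtain rfl : t = (s^2 - 1)/2 := by linarith
  rw [div_lt_div_iff₀ (by nlinarith) (by positivity)]
  -- the difference of the two cross products is `(s - 1)² (s² + 2)`
  nlinarith [mul_pos (pow_pos (sub_pos.2 hs1) 2) (by positivity : (0:ℝ) < s^2 + 2)]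

lemma lt_upper_bound {t s : ℝ} (hs1 : 1 < s) (hs : s^2 = 2*t + 1) :
    3*s*(s-1) / (s^2 + s + 4) < 3*t / (3 + t) := by
  obtain rfl : t = (s^2 - 1)/2 := by linarith
  rw [div_lt_div_iff₀ (by positivity) (by nlinarith)]
  -- the difference of the two cross products is `3 (s - 1) (s² + 2)`
  nlinarith [mul_pos (sub_pos.2 hs1) (by positivity : (0:ℝ) < s^2 + 2)]

end GoodmanHBIM

open GoodmanHBIM in
theorem stmt_11 (Ste : ℝ) (hSte : 0 < Ste)
    (ξ : ℝ)
    (hξ : ξ = Real.sqrt ((3*(2*Ste+1)*(Ste+3) - (9 + 6*Ste)*Real.sqrt (2*Ste+1)) /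
      (12 + 9*Ste + 2*Ste^2))) :
    0 < (3*(2*Ste+1)*(Ste+3) - (9 + 6*Ste)*Real.sqrt (2*Ste+1)) / (12 + 9*Ste + 2*Ste^2) ∧
    (12 + 9*Ste + 2*Ste^2)*ξ^4 - (42*Ste + 12*Ste^2 + 18)*ξ^2 + 9*Ste*(1 + 2*Ste) = 0 ∧
    ξ ∈ Set.Ioo (Real.sqrt (Ste/(2+Ste))) (Real.sqrt (3*Ste/(3+Ste))) := by
  set s := Real.sqrt (2*Ste + 1)
  have hs : s^2 = 2*Ste + 1 := Real.sq_sqrt (by linarith)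
  have hs1 : 1 < s := Real.lt_sqrt_of_sq_lt (by linarith)
  rw [sq_free_boundary_coeff_eq hs] at hξ ⊢
  have hw : 0 < 3*s*(s-1) / (s^2 + s + 4) := by
    have := sub_pos.2 hs1
    positivity
  have hξ2 : ξ^2 = 3*s*(s-1) / (s^2 + s + 4) := by rw [hξ, Real.sq_sqrt hw.le]
  refine ⟨hw, ?_, ?_, ?_⟩
  · rw [show ξ^4 = (ξ^2)^2 by ring, hξ2]
    exact quartic_eq_zero hs
  · rw [hξ]
    exact Real.sqrt_lt_sqrt (by positivity) (lower_bound_lt hs1 hs)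
  · rw [hξ]
    exact Real.sqrt_lt_sqrt hw.le (lt_upper_bound hs1 hs)
end

section
/- For every Ste > 0, the biquadratic equation z⁴ + (6 + Ste)z² − 3·Ste = 0 has a unique positive solution, given explicitly by z = √( (√((6+Ste)² + 12·Ste) − (6+Ste))/2 ), and this solution lies in the open interval (√(Ste/(2+Ste)), √(3·Ste/(3+Ste))). -/
/-!
Substituting `y = z ^ 2` turns the biquadratic into the quadratic `y ^ 2 + b y - c = 0`, which for
`c > 0` has exactly one positive root `(√(b ^ 2 + 4 c) - b) / 2`, the other root being negative.
For `b = 6 + Ste`, `c = 3 Ste` this root `y` satisfies `(6 + Ste) y < 3 Ste`, so `y < Ste / 2`; then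
`3 Ste = y (y + 6 + Ste) < 3 y (2 + Ste)`, which gives the lower bound.
-/

open Real

noncomputable def quadraticPosRoot (b c : ℝ) : ℝ := (√(b ^ 2 + 4 * c) - b) / 2

section QuadraticPosRoot

variable {b c : ℝ}

lemma lt_sqrt_sq_add_four_mul (hc : 0 < c) : |b| < √(b ^ 2 + 4 * c) := by
  rw [← sqrt_sq_eq_abs]
  exact sqrt_lt_sqrt (sq_nonneg b) (by linarith)

lemma quadraticPosRoot_pos (hc : 0 < c) : 0 < quadraticPosRoot b c := by
  have := lt_sqrt_sq_add_four_mul (b := b) hc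
  unfold quadraticPosRoot
  linarith [le_abs_self b]

lemma quadraticPosRoot_add_pos (hc : 0 < c) : 0 < quadraticPosRoot b c + b := by
  have := lt_sqrt_sq_add_four_mul (b := b) hc
  unfold quadraticPosRoot
  linarith [neg_abs_le b]

lemma quadraticPosRoot_isRoot (hc : 0 ≤ c) :
    quadraticPosRoot b c ^ 2 + b * quadraticPosRoot b c - c = 0 := by
  have hsq : √(b ^ 2 + 4 * c) ^ 2 = b ^ 2 + 4 * c := sq_sqrt (by positivity)
  unfold quadraticPosRoot
  linear_combination hsq / 4

lemma eq_quadraticPosRoot {y : ℝ} (hc : 0 < c) (hy : 0 < y) (h : y ^ 2 + b * y - c = 0) :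
    y = quadraticPosRoot b c := by
  set y₀ := quadraticPosRoot b c
  have hfactor : (y - y₀) * (y + (y₀ + b)) = 0 := by
    linear_combination h - quadraticPosRoot_isRoot (b := b) hc.le
  have hpos : 0 < y + (y₀ + b) := by linarith [quadraticPosRoot_add_pos (b := b) hc]
  linarith [(mul_eq_zero.mp hfactor).resolve_right hpos.ne']

lemma biquadratic_pos_root_iff {z : ℝ} (hc : 0 < c) :
    0 < z ∧ z ^ 4 + b * z ^ 2 - c = 0 ↔ z = √(quadraticPosRoot b c) := by
  constructor
  · rintro ⟨hz, h⟩
    rw [← eq_quadraticPosRoot hc (pow_pos hz 2) (by linear_combination h), sqrt_sq hz.le]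
  · rintro rfl
    have hy := quadraticPosRoot_pos (b := b) hc
    refine ⟨sqrt_pos.mpr hy, ?_⟩
    rw [show √(quadraticPosRoot b c) ^ 4 = (√(quadraticPosRoot b c) ^ 2) ^ 2 by ring,
      sq_sqrt hy.le]
    exact quadraticPosRoot_isRoot hc.le

end QuadraticPosRoot

lemma stefan_root_mem_Ioo {Ste y : ℝ} (hSte : 0 < Ste) (hy : 0 < y)
    (h : y ^ 2 + (6 + Ste) * y - 3 * Ste = 0) :
    y ∈ Set.Ioo (Ste / (2 + Ste)) (3 * Ste / (3 + Ste)) := by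
  have hupper : (6 + Ste) * y < 3 * Ste := by nlinarith
  constructor
  · rw [div_lt_iff₀ (by linarith)]
    nlinarith
  · rw [lt_div_iff₀ (by linarith)]
    linarith

theorem stmt_12 (Ste : ℝ) (hSte : 0 < Ste) :
    (∃! z : ℝ, 0 < z ∧ z^4 + (6 + Ste)*z^2 - 3*Ste = 0) ∧
    (∀ z : ℝ, 0 < z ∧ z^4 + (6 + Ste)*z^2 - 3*Ste = 0 →
      z = Real.sqrt ((Real.sqrt ((6+Ste)^2 + 12*Ste) - (6+Ste))/2) ∧
      z ∈ Set.Ioo (Real.sqrt (Ste/(2+Ste))) (Real.sqrt (3*Ste/(3+Ste)))) := by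
  have hc : 0 < 3 * Ste := by positivity
  have hroot : (√((6 + Ste) ^ 2 + 12 * Ste) - (6 + Ste)) / 2 =
      quadraticPosRoot (6 + Ste) (3 * Ste) := by
    unfold quadraticPosRoot; ring_nf
  have hiff := fun z : ℝ => biquadratic_pos_root_iff (z := z) (b := 6 + Ste) hc
  refine ⟨⟨_, (hiff _).mpr rfl, fun z hz => (hiff z).mp hz⟩, fun z hz => ?_⟩
  obtain rfl := (hiff z).mp hz
  have hy := quadraticPosRoot_pos (b := 6 + Ste) hc
  obtain ⟨hlow, hhigh⟩ := stefan_root_mem_Ioo hSte hy (quadraticPosRoot_isRoot hc.le)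
  exact ⟨by rw [hroot], sqrt_lt_sqrt (by positivity) hlow, sqrt_lt_sqrt hy.le hhigh⟩
end

section
/- For every Ste > 0, the equation Ste·z⁴ − 6(1 + Ste)z² + 9·Ste = 0 has exactly one solution in the open interval (0, √3), given explicitly by z = √( 3((1 + Ste) − √(2·Ste + 1))/Ste ). -/
/-! In `w = z²` the equation is a quadratic with discriminant `36 (2 Ste + 1)`, with roots
`3 ((1 + Ste) ± √(2 Ste + 1)) / Ste`; since `1 < √(2 Ste + 1) < 1 + Ste`, the
smaller root lies in `(0, 3)` and the larger one beyond `3`, so `z` is the square root of the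
smaller one. -/

open Real

section StefanQuadratic

variable {S : ℝ}

lemma one_lt_sqrt_two_mul_add_one (hS : 0 < S) : 1 < √(2 * S + 1) := by
  rw [lt_sqrt zero_le_one]
  linarith

lemma sqrt_two_mul_add_one_lt (hS : 0 < S) : √(2 * S + 1) < 1 + S := by
  rw [sqrt_lt' (by linarith)]
  nlinarith

lemma quadratic_eq_zero_iff_eq_root (hS : 0 < S) (w : ℝ) :
    S * w ^ 2 - 6 * (1 + S) * w + 9 * S = 0 ↔
      w = 3 * ((1 + S) + √(2 * S + 1)) / S ∨ w = 3 * ((1 + S) - √(2 * S + 1)) / S := by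
  set s := √(2 * S + 1)
  have hdiscrim : discrim S (-(6 * (1 + S))) (9 * S) = (6 * s) * (6 * s) := by
    have hs : s * s = 2 * S + 1 := mul_self_sqrt (by linarith)
    rw [discrim]
    linear_combination (-36) * hs
  have hroot_add : (-(-(6 * (1 + S))) + 6 * s) / (2 * S) = 3 * ((1 + S) + s) / S := by
    field_simp
    ring
  have hroot_sub : (-(-(6 * (1 + S))) - 6 * s) / (2 * S) = 3 * ((1 + S) - s) / S := by
    field_simp
    ring
  rw [← hroot_add, ← hroot_sub, ← quadratic_eq_zero_iff hS.ne' hdiscrim]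
  constructor <;> intro h <;> linear_combination h

lemma mem_Ioo_sqrt_three_and_quartic_eq_zero_iff (hS : 0 < S) (z : ℝ) :
    z ∈ Set.Ioo 0 √3 ∧ S * z ^ 4 - 6 * (1 + S) * z ^ 2 + 9 * S = 0 ↔
      z = √(3 * ((1 + S) - √(2 * S + 1)) / S) := by
  have hs_gt := one_lt_sqrt_two_mul_add_one hS
  have hs_lt := sqrt_two_mul_add_one_lt hS
  have hroot_pos : 0 < 3 * ((1 + S) - √(2 * S + 1)) / S := by
    apply div_pos <;> linarith
  have hroot_lt : 3 * ((1 + S) - √(2 * S + 1)) / S < 3 := by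
    rw [div_lt_iff₀ hS]
    linarith
  have hroot_gt : 3 < 3 * ((1 + S) + √(2 * S + 1)) / S := by
    rw [lt_div_iff₀ hS]
    linarith
  have hquartic : ∀ x : ℝ, S * x ^ 4 - 6 * (1 + S) * x ^ 2 + 9 * S =
      S * (x ^ 2) ^ 2 - 6 * (1 + S) * x ^ 2 + 9 * S := fun x => by ring
  constructor
  · rintro ⟨⟨hz_pos, hz_lt⟩, heq⟩
    have hz_sq_lt : z ^ 2 < 3 := (lt_sqrt hz_pos.le).mp hz_lt
    rw [hquartic, quadratic_eq_zero_iff_eq_root hS] at heq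
    rcases heq with h | h
    · linarith
    · rw [← h, sqrt_sq hz_pos.le]
  · rintro rfl
    refine ⟨⟨sqrt_pos.mpr hroot_pos, sqrt_lt_sqrt hroot_pos.le hroot_lt⟩, ?_⟩
    rw [hquartic, sq_sqrt hroot_pos.le, quadratic_eq_zero_iff_eq_root hS]
    exact Or.inr rfl

end StefanQuadratic

theorem stmt_14 (Ste : ℝ) (hSte : 0 < Ste) :
    (∃! z : ℝ, z ∈ Set.Ioo (0:ℝ) (Real.sqrt 3) ∧
      Ste*z^4 - 6*(1 + Ste)*z^2 + 9*Ste = 0) ∧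
    (∀ z : ℝ, z ∈ Set.Ioo (0:ℝ) (Real.sqrt 3) ∧ Ste*z^4 - 6*(1 + Ste)*z^2 + 9*Ste = 0 →
      z = Real.sqrt (3*((1 + Ste) - Real.sqrt (2*Ste + 1))/Ste)) := by
  have hiff := mem_Ioo_sqrt_three_and_quartic_eq_zero_iff hSte
  exact ⟨⟨_, (hiff _).mpr rfl, fun z hz => (hiff z).mp hz⟩, fun z hz => (hiff z).mp hz⟩
end

section
/- For every Ste > 0, with ξ₁∞² = (3(2·Ste+1)(Ste+3) − (9 + 6·Ste)√(2·Ste+1))/(12 + 9·Ste + 2·Ste²), the coefficients A₁∞ = (6·Ste − (6+2·Ste)ξ₁∞²)/(Ste(ξ₁∞² + 3)) and B₁∞ = ((3·Ste+6)ξ₁∞² − 3·Ste)/(Ste(ξ₁∞² + 3)) satisfy A₁∞ = (√(2·Ste+1) − 1)/Ste and B₁∞ = 1 + (1 − √(2·Ste+1))/Ste. -/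
/-!
Write `s = √(2·Ste + 1)`, so that `Ste = (s² - 1)/2`. In terms of `s` the denominator of `ξ₁∞²`
factors as `(s² + s + 4)(s² - s + 4)/2` and its numerator as `3s(s - 1)(s² - s + 4)/2`, so
`ξ₁∞² = 3s(s - 1)/(s² + s + 4)` and `ξ₁∞² + 3 = 6(s² + 2)/(s² + s + 4)`. The factor `s² + 2` then
cancels from the numerators of `Ste·A₁∞` and `Ste·B₁∞`, leaving `s - 1` and `Ste + 1 - s`.
-/

namespace Goodman

variable {Ste s ξ : ℝ}

lemma sq_add_add_four_pos (s : ℝ) : 0 < s ^ 2 + s + 4 := by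
  nlinarith [sq_nonneg (s + 1 / 2)]

lemma xiSq_eq (hs : s ^ 2 = 2 * Ste + 1) :
    (3 * (2 * Ste + 1) * (Ste + 3) - (9 + 6 * Ste) * s) / (12 + 9 * Ste + 2 * Ste ^ 2) =
      3 * s * (s - 1) / (s ^ 2 + s + 4) := by
  obtain rfl : Ste = (s ^ 2 - 1) / 2 := by linarith
  have hnum : 3 * (2 * ((s ^ 2 - 1) / 2) + 1) * ((s ^ 2 - 1) / 2 + 3) -
      (9 + 6 * ((s ^ 2 - 1) / 2)) * s = 3 * s * (s - 1) * ((s ^ 2 - s + 4) / 2) := by ring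
  have hden : 12 + 9 * ((s ^ 2 - 1) / 2) + 2 * ((s ^ 2 - 1) / 2) ^ 2 =
      (s ^ 2 + s + 4) * ((s ^ 2 - s + 4) / 2) := by ring
  have hcommon : (s ^ 2 - s + 4) / 2 ≠ 0 := by nlinarith [sq_nonneg (s - 1 / 2)]
  rw [hnum, hden, mul_div_mul_right _ _ hcommon]

lemma xiSq_add_three_pos (hξ : ξ = 3 * s * (s - 1) / (s ^ 2 + s + 4)) : 0 < ξ + 3 := by
  have hpos := sq_add_add_four_pos s
  have key : (ξ + 3) * (s ^ 2 + s + 4) = 6 * (s ^ 2 + 2) := by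
    linear_combination (eq_div_iff hpos.ne').1 hξ
  refine pos_of_mul_pos_left ?_ hpos.le
  rw [key]
  positivity

lemma A_numerator_eq (hs : s ^ 2 = 2 * Ste + 1) (hξ : ξ = 3 * s * (s - 1) / (s ^ 2 + s + 4)) :
    6 * Ste - (6 + 2 * Ste) * ξ = (s - 1) * (ξ + 3) := by
  obtain rfl : Ste = (s ^ 2 - 1) / 2 := by linarith
  have hne := (sq_add_add_four_pos s).ne'
  apply mul_right_cancel₀ hne
  linear_combination (-(s ^ 2 + s + 4)) * (eq_div_iff hne).1 hξ

lemma B_numerator_eq (hs : s ^ 2 = 2 * Ste + 1) (hξ : ξ = 3 * s * (s - 1) / (s ^ 2 + s + 4)) :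
    (3 * Ste + 6) * ξ - 3 * Ste = (Ste + 1 - s) * (ξ + 3) := by
  obtain rfl : Ste = (s ^ 2 - 1) / 2 := by linarith
  have hne := (sq_add_add_four_pos s).ne'
  apply mul_right_cancel₀ hne
  linear_combination (s ^ 2 + s + 4) * (eq_div_iff hne).1 hξ

end Goodman

open Goodman in
theorem stmt_15 (Ste : ℝ) (hSte : 0 < Ste)
    (ξsq A B : ℝ)
    (hξsq : ξsq = (3*(2*Ste+1)*(Ste+3) - (9 + 6*Ste)*Real.sqrt (2*Ste+1)) /
      (12 + 9*Ste + 2*Ste^2))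
    (hA : A = (6*Ste - (6+2*Ste)*ξsq) / (Ste*(ξsq + 3)))
    (hB : B = ((3*Ste+6)*ξsq - 3*Ste) / (Ste*(ξsq + 3))) :
    A = (Real.sqrt (2*Ste+1) - 1)/Ste ∧ B = 1 + (1 - Real.sqrt (2*Ste+1))/Ste := by
  set s := Real.sqrt (2*Ste+1)
  have hs : s ^ 2 = 2 * Ste + 1 := Real.sq_sqrt (by linarith)
  have hξ := hξsq.trans (xiSq_eq hs)
  have h3 := (xiSq_add_three_pos hξ).ne'
  constructor
  · rw [hA, A_numerator_eq hs hξ, mul_div_mul_right _ _ h3]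
  · rw [hB, B_numerator_eq hs hξ, mul_div_mul_right _ _ h3]
    field_simp
    ring
end

section
/- Fix Ste > 0. For Bi > 0, let ξ₂(Bi) denote the unique positive root of z⁴ + (2/Bi)z³ + (6+Ste)z² + (3/Bi)z − 3·Ste = 0. Then ξ₂(Bi) tends, as Bi → ∞, to the unique positive root ξ₂∞ of z⁴ + (6+Ste)z² − 3·Ste = 0, namely ξ₂∞ = √((√((6+Ste)² + 12·Ste) − (6+Ste))/2). -/
/-!
With ε = 1/Bi the root ξ = ξ₂(Bi) satisfies ξ⁴ + (6+Ste)ξ² = 3·Ste - ε(2ξ³ + 3ξ), so ξ is the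
nonnegative root of the biquadratic z⁴ + (6+Ste)z² = y at y = 3·Ste - ε(2ξ³ + 3ξ). That root is a
continuous, monotone function of y. Since the perturbation ε(2ξ³ + 3ξ) is nonnegative, monotonicity
bounds ξ by the Dirichlet root ξ₂∞; hence the perturbation is O(1/Bi), and continuity gives the limit.
-/

open Filter Topology Real

/-- The nonnegative root `z` of `z⁴ + A z² = y`. -/
noncomputable def biquadRoot (A y : ℝ) : ℝ := √((√(A ^ 2 + 4 * y) - A) / 2)

lemma continuous_biquadRoot (A : ℝ) : Continuous (biquadRoot A) := by
  unfold biquadRoot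
  fun_prop

lemma biquadRoot_mono (A : ℝ) : Monotone (biquadRoot A) := fun y y' h => by
  unfold biquadRoot
  gcongr

lemma eq_biquadRoot {A x y : ℝ} (hA : 0 ≤ A) (hx : 0 ≤ x) (h : x ^ 4 + A * x ^ 2 = y) :
    x = biquadRoot A y := by
  have hsq : A ^ 2 + 4 * y = (2 * x ^ 2 + A) ^ 2 := by rw [← h]; ring
  rw [biquadRoot, hsq, sqrt_sq (by positivity), show (2 * x ^ 2 + A - A) / 2 = x ^ 2 by ring,
    sqrt_sq hx]

theorem stmt_17 (Ste : ℝ) (hSte : 0 < Ste)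
    (ξ₂ : ℝ → ℝ)
    (hroot : ∀ Bi : ℝ, 0 < Bi → 0 < ξ₂ Bi ∧
      (ξ₂ Bi)^4 + (2/Bi)*(ξ₂ Bi)^3 + (6+Ste)*(ξ₂ Bi)^2 + (3/Bi)*(ξ₂ Bi) - 3*Ste = 0) :
    Filter.Tendsto ξ₂ Filter.atTop
      (nhds (Real.sqrt ((Real.sqrt ((6+Ste)^2 + 12*Ste) - (6+Ste))/2))) := by
  set A := 6 + Ste
  set L := biquadRoot A (3 * Ste)
  set δ : ℝ → ℝ := fun Bi => (2 * ξ₂ Bi ^ 3 + 3 * ξ₂ Bi) / Bi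
  have hδ_nonneg : ∀ Bi, 0 < Bi → 0 ≤ δ Bi := fun Bi hBi => by
    have := (hroot Bi hBi).1
    positivity
  have hξ : ∀ Bi, 0 < Bi → ξ₂ Bi = biquadRoot A (3 * Ste - δ Bi) := fun Bi hBi =>
    eq_biquadRoot (by positivity) (hroot Bi hBi).1.le (by linear_combination (hroot Bi hBi).2)
  have hξ_le : ∀ Bi, 0 < Bi → ξ₂ Bi ≤ L := fun Bi hBi =>
    (hξ Bi hBi).trans_le (biquadRoot_mono A (by linarith [hδ_nonneg Bi hBi]))
  have hδ_le : ∀ Bi, 0 < Bi → δ Bi ≤ (2 * L ^ 3 + 3 * L) / Bi := fun Bi hBi => by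
    have := (hroot Bi hBi).1
    have := hξ_le Bi hBi
    simp only [δ]
    gcongr
  have hδ : Tendsto δ atTop (𝓝 0) :=
    squeeze_zero' ((eventually_gt_atTop 0).mono hδ_nonneg) ((eventually_gt_atTop 0).mono hδ_le)
      (tendsto_const_nhds.div_atTop tendsto_id)
  have hlim : Tendsto (fun Bi => biquadRoot A (3 * Ste - δ Bi)) atTop (𝓝 L) := by
    simpa only [sub_zero, Function.comp_def] using ((continuous_biquadRoot A).tendsto _).comp (tendsto_const_nhds.sub hδ)
  convert hlim.congr' ((eventually_gt_atTop 0).mono fun Bi hBi => (hξ Bi hBi).symm) using 2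
  simp only [L, biquadRoot]
  ring_nf
end

section
/- Fix Ste > 0. For Bi > 0, let ξ₃(Bi) denote the unique root in (0, √3) of (1/Bi)z³ + (6+Ste)z² + (3/Bi)z − 3·Ste = 0. Then ξ₃(Bi) → √(3·Ste/(6+Ste)) as Bi → ∞. -/
/-! Dividing the cubic by `Bi` exhibits it as `(6 + Ste) ξ² = 3 Ste - (ξ³ + 3ξ) / Bi`. Since the root
stays in `(0, √3)`, the perturbation `(ξ³ + 3ξ) / Bi` is `O(1 / Bi)`, so `ξ²` tends to
`3 Ste / (6 + Ste)`, and `ξ = √(ξ²)` tends to its square root. -/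

open Filter Topology

theorem Filter.Tendsto.of_eventually_mul_add_mul_eq {ι 𝕜 : Type*} [NormedField 𝕜] {l : Filter ι}
    {x ε f : ι → 𝕜} {a c : 𝕜} (ha : a ≠ 0) (hε : Tendsto ε l (𝓝 0))
    (hf : IsBoundedUnder (· ≤ ·) l ((‖·‖) ∘ f)) (h : ∀ᶠ t in l, a * x t + ε t * f t = c) :
    Tendsto x l (𝓝 (c / a)) := by
  have hlim : Tendsto (fun t => (c - ε t * f t) / a) l (𝓝 ((c - 0) / a)) :=
    ((tendsto_const_nhds.sub (hε.zero_mul_isBoundedUnder_le hf)).div_const a)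
  rw [sub_zero] at hlim
  refine hlim.congr' ?_
  filter_upwards [h] with t ht
  rw [← ht, add_sub_cancel_right, mul_div_cancel_left₀ _ ha]

theorem abs_pow_three_add_three_mul_le {x : ℝ} (hx : x ∈ Set.Ioo 0 √3) :
    |x ^ 3 + 3 * x| ≤ 6 * √3 := by
  obtain ⟨hx0, hx3⟩ := hx
  have hsq : x ^ 2 < 3 := by
    nlinarith [Real.sq_sqrt (show (0 : ℝ) ≤ 3 by norm_num)]
  rw [abs_of_pos (by positivity)]
  nlinarith [mul_lt_mul_of_pos_left hx3 (show (0 : ℝ) < x ^ 2 + 3 by positivity)]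

theorem stmt_18 (Ste : ℝ) (hSte : 0 < Ste)
    (ξ₃ : ℝ → ℝ)
    (hroot : ∀ Bi : ℝ, 0 < Bi → ξ₃ Bi ∈ Set.Ioo (0:ℝ) (Real.sqrt 3) ∧
      (1/Bi)*(ξ₃ Bi)^3 + (6+Ste)*(ξ₃ Bi)^2 + (3/Bi)*(ξ₃ Bi) - 3*Ste = 0) :
    Filter.Tendsto ξ₃ Filter.atTop (nhds (Real.sqrt (3*Ste/(6+Ste)))) := by
  have hroot' : ∀ᶠ Bi in atTop, ξ₃ Bi ∈ Set.Ioo 0 √3 ∧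
      (6 + Ste) * ξ₃ Bi ^ 2 + Bi⁻¹ * (ξ₃ Bi ^ 3 + 3 * ξ₃ Bi) = 3 * Ste := by
    filter_upwards [eventually_gt_atTop 0] with Bi hBi
    obtain ⟨hmem, heq⟩ := hroot Bi hBi
    exact ⟨hmem, by linear_combination heq⟩
  have hbdd : IsBoundedUnder (· ≤ ·) atTop ((‖·‖) ∘ fun Bi => ξ₃ Bi ^ 3 + 3 * ξ₃ Bi) :=
    isBoundedUnder_of_eventually_le (a := 6 * √3) <| hroot'.mono fun Bi h =>
      abs_pow_three_add_three_mul_le h.1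
  have hsq : Tendsto (fun Bi => ξ₃ Bi ^ 2) atTop (𝓝 (3 * Ste / (6 + Ste))) :=
    .of_eventually_mul_add_mul_eq (by positivity) tendsto_inv_atTop_zero hbdd
      (hroot'.mono fun _ h => h.2)
  refine hsq.sqrt.congr' ?_
  filter_upwards [hroot'] with Bi h
  exact Real.sqrt_sq h.1.1.le
end

section
/- For every Ste > 0, the quantities ξ_min∞ = √(Ste/(2+Ste)) and ξ_max∞ = √(3·Ste/(3+Ste)) satisfy 0 < ξ_min∞ < ξ_max∞ < √3, and the polynomial p₁∞(z) = (12 + 9·Ste + 2·Ste²)z⁴ − (42·Ste + 12·Ste² + 18)z² + 9·Ste(1+2·Ste) satisfies p₁∞(ξ_min∞) = 2·Ste²(2·Ste+3)²/(Ste+2)² > 0 and p₁∞(ξ_max∞) = −9·Ste(2·Ste+3)²/(Ste+3)² < 0. -/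
/-! Both ξ_min∞ and ξ_max∞ are square roots, and p₁∞ is a quadratic in z², so each value of
p₁∞ is that quadratic evaluated at a rational function of Ste; clearing the denominator
(2 + Ste)² resp. (3 + Ste)² leaves a polynomial identity whose right-hand side has an evident
sign. The ordering of the ξ's reduces, by monotonicity of √, to cross-multiplied inequalities. -/

open Real

lemma biquadratic_sqrt (a b c : ℝ) {x : ℝ} (hx : 0 ≤ x) :
    a * √x ^ 4 - b * √x ^ 2 + c = a * x ^ 2 - b * x + c := by
  rw [show √x ^ 4 = (√x ^ 2) ^ 2 by ring, sq_sqrt hx]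

lemma div_two_add_lt_three_mul_div_three_add {s : ℝ} (hs : 0 < s) :
    s / (2 + s) < 3 * s / (3 + s) := by
  rw [div_lt_div_iff₀ (by linarith) (by linarith)]
  nlinarith

lemma three_mul_div_three_add_lt_three {s : ℝ} (hs : -3 < s) : 3 * s / (3 + s) < 3 := by
  rw [div_lt_iff₀ (by linarith)]
  linarith

-- p₁∞(z) = limitQuadratic Ste (z ^ 2)
def limitQuadratic (s w : ℝ) : ℝ :=
  (12 + 9*s + 2*s^2) * w ^ 2 - (42*s + 12*s^2 + 18) * w + 9*s*(1+2*s)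

lemma limitQuadratic_div_two_add {s : ℝ} (hs : 2 + s ≠ 0) :
    limitQuadratic s (s / (2 + s)) = 2*s^2*(2*s+3)^2/(s+2)^2 := by
  rw [limitQuadratic, add_comm 2 s] at *
  field_simp
  ring

lemma limitQuadratic_three_mul_div_three_add {s : ℝ} (hs : 3 + s ≠ 0) :
    limitQuadratic s (3 * s / (3 + s)) = -9*s*(2*s+3)^2/(s+3)^2 := by
  rw [limitQuadratic, add_comm 3 s] at *
  field_simp
  ring

theorem stmt_19 (Ste : ℝ) (hSte : 0 < Ste)
    (ξmin ξmax : ℝ) (p : ℝ → ℝ)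
    (hξmin : ξmin = Real.sqrt (Ste/(2+Ste)))
    (hξmax : ξmax = Real.sqrt (3*Ste/(3+Ste)))
    (hp : ∀ z, p z = (12 + 9*Ste + 2*Ste^2)*z^4 - (42*Ste + 12*Ste^2 + 18)*z^2 +
      9*Ste*(1+2*Ste)) :
    (0 < ξmin ∧ ξmin < ξmax ∧ ξmax < Real.sqrt 3) ∧
    p ξmin = 2*Ste^2*(2*Ste+3)^2/(Ste+2)^2 ∧ 0 < p ξmin ∧
    p ξmax = -9*Ste*(2*Ste+3)^2/(Ste+3)^2 ∧ p ξmax < 0 := by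
  have hmin : 0 < Ste / (2 + Ste) := by positivity
  have hmax : 0 < 3 * Ste / (3 + Ste) := by positivity
  have hp_min : p ξmin = 2*Ste^2*(2*Ste+3)^2/(Ste+2)^2 := by
    rw [hp, hξmin, biquadratic_sqrt _ _ _ hmin.le]
    exact limitQuadratic_div_two_add (by positivity)
  have hp_max : p ξmax = -9*Ste*(2*Ste+3)^2/(Ste+3)^2 := by
    rw [hp, hξmax, biquadratic_sqrt _ _ _ hmax.le]
    exact limitQuadratic_three_mul_div_three_add (by positivity)
  refine ⟨⟨?_, ?_, ?_⟩, hp_min, ?_, hp_max, ?_⟩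
  · exact hξmin ▸ sqrt_pos.mpr hmin
  · exact hξmin ▸ hξmax ▸ sqrt_lt_sqrt hmin.le (div_two_add_lt_three_mul_div_three_add hSte)
  · exact hξmax ▸ sqrt_lt_sqrt hmax.le (three_mul_div_three_add_lt_three (by linarith))
  · rw [hp_min]; positivity
  · rw [hp_max, neg_mul, neg_mul, neg_div, neg_lt_zero]; positivity
end
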